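/- Let E be a bounded semi-infinite real matrix, and for each k ≥ 1 let E^{(k)} be the semi-infinite matrix that coincides with E in its leading k×k submatrix (entries with i ≤ k and j ≤ k) and is zero elsewhere. Then E has the decay property if and only if lim_{k→∞} ‖E − E^{(k)}‖_∞ = 0. -/

import Mathlib

/-!
Write `r_k(i)` for the `i`-th row sum of `E − E^{(k)}`, and `w_i` for that of `E`. Then
`0 ≤ r_k(i) ≤ w_i`, with `r_i(i) = w_i`, and for fixed `i` the sum `r_k(i)` is the tail of
row `i` beyond column `k` once `k > i`, so `r_k(i) → 0`. If `w_i → 0`, only finitely many rows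
have `w_i ≥ ε`, and these finitely many tails are eventually below `ε`: the supremum
`‖E − E^{(k)}‖_∞ = sup_i r_k(i)` tends to `0`. Conversely `w_k = r_k(k) ≤ ‖E − E^{(k)}‖_∞`.
-/

open Filter Topology

/-- Every row of `A` is absolutely summable. -/
def RowsSummable (A : ℕ → ℕ → ℝ) : Prop := ∀ i, Summable fun j => |A i j|

/-- The infinity norm of a semi-infinite matrix: the supremum of the row sums. -/
noncomputable def normInf (A : ℕ → ℕ → ℝ) : ℝ := ⨆ i, ∑' j, |A i j|

/-- `A` is bounded: all row sums are finite and their supremum is finite. -/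
def MatBounded (A : ℕ → ℕ → ℝ) : Prop :=
  RowsSummable A ∧ BddAbove (Set.range fun i => ∑' j, |A i j|)

/-- `A` has the decay property: all row sums are finite and tend to zero. -/
def HasDecay (A : ℕ → ℕ → ℝ) : Prop :=
  RowsSummable A ∧ Tendsto (fun i => ∑' j, |A i j|) atTop (𝓝 0)

theorem tendsto_iSup_of_le_of_tendsto_cofinite {ι κ : Type*} {l : Filter κ} {g : κ → ι → ℝ}
    {w : ι → ℝ} (hg0 : ∀ k i, 0 ≤ g k i) (hgw : ∀ k i, g k i ≤ w i)
    (hw : Tendsto w cofinite (𝓝 0)) (hg : ∀ i, Tendsto (fun k => g k i) l (𝓝 0)) :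
    Tendsto (fun k => ⨆ i, g k i) l (𝓝 0) := by
  refine tendsto_order.2 ⟨fun a ha => Eventually.of_forall fun k =>
    ha.trans_le (Real.iSup_nonneg (hg0 k)), fun ε hε => ?_⟩
  have hε2 := half_pos hε
  have hlarge : {i | ε / 2 ≤ w i}.Finite := by
    simpa [eventually_cofinite] using hw.eventually (gt_mem_nhds hε2)
  have hsmall : ∀ᶠ k in l, ∀ i ∈ {i | ε / 2 ≤ w i}, g k i < ε / 2 :=
    (eventually_all_finite hlarge).2 fun i _ => (hg i).eventually (gt_mem_nhds hε2)
  filter_upwards [hsmall] with k hk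
  refine (Real.iSup_le (fun i => ?_) hε2.le).trans_lt (half_lt_self hε)
  by_cases hi : ε / 2 ≤ w i
  · exact (hk i hi).le
  · exact (hgw k i).trans (not_le.1 hi).le

/-- `A^{(k)}` in the notation of the statement. -/
def leadingBlock (k : ℕ) (A : ℕ → ℕ → ℝ) : ℕ → ℕ → ℝ :=
  fun i j => if i < k ∧ j < k then A i j else 0

section leadingBlock

variable {A : ℕ → ℕ → ℝ} {i j k : ℕ}

theorem abs_sub_leadingBlock_le : |A i j - leadingBlock k A i j| ≤ |A i j| := by
  unfold leadingBlock
  split_ifs <;> simp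

theorem sub_leadingBlock_of_le_row (h : k ≤ i) : A i j - leadingBlock k A i j = A i j := by
  simp [leadingBlock, h.not_gt]

theorem summable_abs_sub_leadingBlock (hA : Summable fun j => |A i j|) :
    Summable fun j => |A i j - leadingBlock k A i j| :=
  hA.of_nonneg_of_le (fun _ => abs_nonneg _) fun _ => abs_sub_leadingBlock_le

theorem tsum_abs_sub_leadingBlock_le (hA : Summable fun j => |A i j|) :
    ∑' j, |A i j - leadingBlock k A i j| ≤ ∑' j, |A i j| :=
  (summable_abs_sub_leadingBlock hA).tsum_mono hA fun _ => abs_sub_leadingBlock_le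

theorem tsum_abs_sub_leadingBlock_self : ∑' j, |A k j - leadingBlock k A k j| = ∑' j, |A k j| := by
  simp_rw [sub_leadingBlock_of_le_row le_rfl]

theorem tsum_abs_sub_leadingBlock_of_lt (hA : Summable fun j => |A i j|) (h : i < k) :
    ∑' j, |A i j - leadingBlock k A i j| = ∑' j, |A i (j + k)| := by
  rw [← (summable_abs_sub_leadingBlock hA).sum_add_tsum_nat_add k]
  have hhead : ∀ j ∈ Finset.range k, |A i j - leadingBlock k A i j| = 0 := fun j hj => by
    simp [leadingBlock, h, Finset.mem_range.1 hj]
  rw [Finset.sum_eq_zero hhead, zero_add]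
  simp [leadingBlock]

theorem tendsto_tsum_abs_sub_leadingBlock (hA : Summable fun j => |A i j|) :
    Tendsto (fun k => ∑' j, |A i j - leadingBlock k A i j|) atTop (𝓝 0) :=
  (tendsto_sum_nat_add fun j => |A i j|).congr' <| by
    filter_upwards [eventually_gt_atTop i] with k hk
    exact (tsum_abs_sub_leadingBlock_of_lt hA hk).symm

end leadingBlock

theorem stmt1 (E : ℕ → ℕ → ℝ) (hE : MatBounded E) :
    HasDecay E ↔
      Tendsto
        (fun k => normInf (fun i j => E i j - (if i < k ∧ j < k then E i j else 0)))
        atTop (𝓝 0) := by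
  change _ ↔ Tendsto (fun k => ⨆ i, ∑' j, |E i j - leadingBlock k E i j|) atTop (𝓝 0)
  obtain ⟨hrows, B, hB⟩ := hE
  have hle k i := tsum_abs_sub_leadingBlock_le (k := k) (hrows i)
  constructor
  · rintro ⟨-, hdecay⟩
    exact tendsto_iSup_of_le_of_tendsto_cofinite (fun _ _ => tsum_nonneg fun _ => abs_nonneg _)
      hle (Nat.cofinite_eq_atTop ▸ hdecay) fun i => tendsto_tsum_abs_sub_leadingBlock (hrows i)
  · intro hnorm
    refine ⟨hrows, squeeze_zero (fun _ => tsum_nonneg fun _ => abs_nonneg _) (fun k => ?_) hnorm⟩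
    have hbdd : BddAbove (Set.range fun i => ∑' j, |E i j - leadingBlock k E i j|) :=
      ⟨B, Set.forall_mem_range.2 fun i => (hle k i).trans (hB ⟨i, rfl⟩)⟩
    exact tsum_abs_sub_leadingBlock_self.symm.le.trans (le_ciSup hbdd k)
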